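/- The infinite word u = lim u_i does not admit uniform frequencies of letters: there is no real f such that for every sequence (w_n) of factors of u with |w_n| → ∞, |w_n|_0/|w_n| → f. -/

import Mathlib

/-!
Both `u_i` and `v_i` are factors of `u` (`u_i` is a prefix, `v_i` sits inside `u_{i+1}`) and their
lengths tend to infinity, so a uniform frequency would force the frequencies of `0` in `u_i` and in
`v_i` to have the same limit. Put `t_i = 4 ^ 2 ^ i`, so that `m_i = t_i ^ 4`, `l_i = 16 t_i`,
`n_i = t_i ^ 5` and `|v_i| = (t_i / 4) |u_i|`. Then the frequencies of `0` in
`u_{i+1}` and `v_{i+1}` are the weighted means `(t_i² f(u_i) + 4 f(v_i)) / (t_i² + 4)` and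
`(4 f(u_i) + t_i² f(v_i)) / (t_i² + 4)`, so the gap `f(u_i) - f(v_i)` is multiplied by
`(t_i² - 4) / (t_i² + 4)` at each step. As `t_{i+1} = t_i²` grows doubly exponentially, the gap
stays above `1/2 + 1/t_i` for `i ≥ 1`.
-/

/-- The `k`-th power of a finite word `w` (concatenation of `k` copies). -/
def wpow (w : List Bool) (k : ℕ) : List Bool := (List.replicate k w).flatten

/-- The pair of words `(u_i, v_i)`:  `u_0 = 0`, `v_0 = 1`,
`u_{i+1} = u_i^{m_i} v_i^{l_i}`, `v_{i+1} = u_i^{m_i} v_i^{n_i}`. -/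
def uvSeq (l m n : ℕ → ℕ) : ℕ → List Bool × List Bool
  | 0 => ([false], [true])
  | i + 1 =>
      (wpow (uvSeq l m n i).1 (m i) ++ wpow (uvSeq l m n i).2 (l i),
       wpow (uvSeq l m n i).1 (m i) ++ wpow (uvSeq l m n i).2 (n i))

/-- The substitution `σ_h` : `0 ↦ 0^{m_h} 1^{l_h}`, `1 ↦ 0^{m_h} 1^{n_h}`. -/
def subw (l m n : ℕ → ℕ) (h : ℕ) (w : List Bool) : List Bool :=
  w.flatMap fun c => List.replicate (m h) false ++ List.replicate (if c then n h else l h) true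

/-- `wordIter i h = σ_h σ_{h+1} ⋯ σ_{h+i-1}(0)`. -/
def wordIter (l m n : ℕ → ℕ) : ℕ → ℕ → List Bool
  | 0, _ => [false]
  | i + 1, h => subw l m n h (wordIter l m n i (h + 1))

/-- The infinite word `u^{(h)} = lim_i σ_h ⋯ σ_{h+i-1}(0)`. -/
def limWord (l m n : ℕ → ℕ) (h : ℕ) (k : ℕ) : Bool :=
  (wordIter l m n (k + 1) h).getD k false

/-- `w` is a factor of the infinite word `U`. -/
def IsFactor (U : ℕ → Bool) (w : List Bool) : Prop :=
  ∃ k, w = (List.range w.length).map fun j => U (k + j)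

/-- `σ_0 σ_1 ⋯ σ_{h+i-1}` starting at `h`, applied to `w`. -/
def subComp (l m n : ℕ → ℕ) : ℕ → ℕ → List Bool → List Bool
  | 0, _, w => w
  | i + 1, h, w => subw l m n h (subComp l m n i (h + 1) w)

/-- `\hat{σ}_h(w) = 1^{l_h} σ_h(w) 0^{m_h} 1^{l_h}`. -/
def hatw (l m n : ℕ → ℕ) (h : ℕ) (w : List Bool) : List Bool :=
  List.replicate (l h) true ++ subw l m n h w ++
    List.replicate (m h) false ++ List.replicate (l h) true

/-- `hatComp i h w = \hat{σ}_h ⋯ \hat{σ}_{h+i-1}(w)`. -/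
def hatComp (l m n : ℕ → ℕ) : ℕ → ℕ → List Bool → List Bool
  | 0, _, w => w
  | i + 1, h, w => hatw l m n h (hatComp l m n i (h + 1) w)

/-- The complexity function of the infinite word `U`. -/
noncomputable def complexityFn (U : ℕ → Bool) (nn : ℕ) : ℕ :=
  Set.ncard {w : List Bool | w.length = nn ∧ IsFactor U w}

open Filter

theorem wpow_succ (w : List Bool) (k : ℕ) : wpow w (k + 1) = w ++ wpow w k := by
  simp [wpow, List.replicate_succ]

@[simp]
theorem length_wpow (w : List Bool) (k : ℕ) : (wpow w k).length = k * w.length := by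
  simp [wpow]

@[simp]
theorem count_wpow (c : Bool) (w : List Bool) (k : ℕ) :
    (wpow w k).count c = k * w.count c := by
  simp [wpow, List.count_flatten]

theorem prefix_wpow {w : List Bool} {k : ℕ} (hk : 0 < k) : w <+: wpow w k := by
  obtain ⟨k, rfl⟩ := Nat.exists_eq_add_of_lt hk
  rw [Nat.zero_add, wpow_succ]
  exact List.prefix_append _ _

theorem IsFactor.of_infix {U : ℕ → Bool} {v w : List Bool}
    (hU : ∀ j (hj : j < v.length), U j = v[j]) (hw : w <:+: v) : IsFactor U w := by
  obtain ⟨s, t, rfl⟩ := hw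
  refine ⟨s.length, List.ext_getElem (by simp) fun j hj _ => ?_⟩
  rw [List.getElem_map, List.getElem_range, hU _ (by simp; omega)]
  simp [List.getElem_append_right, List.getElem_append_left, hj]

noncomputable def zeroFreq (w : List Bool) : ℝ := w.count false / w.length

theorem length_mul_zeroFreq (w : List Bool) : (w.length : ℝ) * zeroFreq w = w.count false := by
  by_cases hw : w = []
  · simp [hw]
  · exact mul_div_cancel₀ _ (by simpa using hw)

theorem zeroFreq_wpow_append (x y : List Bool) (p q : ℕ) :
    zeroFreq (wpow x p ++ wpow y q) =
      (p * x.length * zeroFreq x + q * y.length * zeroFreq y) / (p * x.length + q * y.length) := by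
  simp only [mul_assoc, length_mul_zeroFreq]
  simp [zeroFreq, List.count_append]

theorem not_uniform_zeroFreq {U : ℕ → Bool} {x y : ℕ → List Bool}
    (hx : ∀ k, IsFactor U (x k)) (hy : ∀ k, IsFactor U (y k))
    (hxl : Tendsto (fun k => (x k).length) atTop atTop)
    (hyl : Tendsto (fun k => (y k).length) atTop atTop) {ε : ℝ} (hε : 0 < ε)
    (hgap : ∀ᶠ k in atTop, ε ≤ zeroFreq (x k) - zeroFreq (y k)) :
    ¬ ∃ f : ℝ, ∀ w : ℕ → List Bool, (∀ k, IsFactor U (w k)) →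
        Tendsto (fun k => (w k).length) atTop atTop →
        Tendsto (fun k => ((w k).count false : ℝ) / (w k).length) atTop (nhds f) := by
  rintro ⟨f, hf⟩
  have hlim : Tendsto (fun k => zeroFreq (x k) - zeroFreq (y k)) atTop (nhds (f - f)) :=
    (hf x hx hxl).sub (hf y hy hyl)
  rw [sub_self] at hlim
  exact hε.not_ge (ge_of_tendsto hlim hgap)

section Substitution

variable (l m n : ℕ → ℕ)

theorem subw_append (h : ℕ) (w v : List Bool) :
    subw l m n h (w ++ v) = subw l m n h w ++ subw l m n h v :=
  List.flatMap_append

theorem subw_singleton_false (h : ℕ) :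
    subw l m n h [false] = wpow [false] (m h) ++ wpow [true] (l h) := by
  simp [subw, wpow]

theorem subw_singleton_true (h : ℕ) :
    subw l m n h [true] = wpow [false] (m h) ++ wpow [true] (n h) := by
  simp [subw, wpow]

theorem length_subw_ge (h : ℕ) (w : List Bool) : m h * w.length ≤ (subw l m n h w).length := by
  induction w with
  | nil => simp [subw]
  | cons c w ih =>
    have hc : m h ≤ (subw l m n h [c]).length := by simp [subw]
    rw [← List.singleton_append, subw_append, List.length_append, List.length_append, mul_add]
    simpa using Nat.add_le_add hc ih

theorem subComp_append (i h : ℕ) (w v : List Bool) :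
    subComp l m n i h (w ++ v) = subComp l m n i h w ++ subComp l m n i h v := by
  induction i generalizing h with
  | zero => rfl
  | succ i ih => simp [subComp, ih, subw_append]

theorem subComp_wpow (i h : ℕ) (w : List Bool) (k : ℕ) :
    subComp l m n i h (wpow w k) = wpow (subComp l m n i h w) k := by
  induction k with
  | zero =>
    induction i generalizing h with
    | zero => rfl
    | succ i ih => simp_all [subComp, subw, wpow]
  | succ k ih => rw [wpow_succ, wpow_succ, subComp_append, ih]

theorem subComp_succ (i h : ℕ) (w : List Bool) :
    subComp l m n (i + 1) h w = subComp l m n i h (subw l m n (h + i) w) := by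
  induction i generalizing h with
  | zero => rfl
  | succ i ih =>
    rw [subComp, ih, Nat.add_right_comm, Nat.add_assoc]
    rfl

theorem wordIter_eq_subComp (i h : ℕ) : wordIter l m n i h = subComp l m n i h [false] := by
  induction i generalizing h with
  | zero => rfl
  | succ i ih => rw [wordIter, ih]; rfl

theorem uvSeq_eq_subComp (i : ℕ) :
    uvSeq l m n i = (subComp l m n i 0 [false], subComp l m n i 0 [true]) := by
  induction i with
  | zero => rfl
  | succ i ih =>
    simp only [uvSeq, ih, subComp_succ, Nat.zero_add, subw_singleton_false,
      subw_singleton_true, subComp_append, subComp_wpow]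

theorem wordIter_zero_eq_uvSeq (i : ℕ) : wordIter l m n i 0 = (uvSeq l m n i).1 := by
  rw [uvSeq_eq_subComp, wordIter_eq_subComp]

theorem wordIter_prefix_succ (hm : ∀ h, 0 < m h) (i h : ℕ) :
    wordIter l m n i h <+: wordIter l m n (i + 1) h := by
  induction i generalizing h with
  | zero =>
    obtain ⟨k, hk⟩ := Nat.exists_eq_add_of_lt (hm h)
    simp [wordIter, subw, hk, List.replicate_succ]
  | succ i ih => exact (ih (h + 1)).flatMap _

theorem wordIter_prefix_of_le (hm : ∀ h, 0 < m h) {i j : ℕ} (hij : i ≤ j) (h : ℕ) :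
    wordIter l m n i h <+: wordIter l m n j h := by
  induction j, hij using Nat.le_induction with
  | base => exact List.prefix_refl _
  | succ j _ ih => exact ih.trans (wordIter_prefix_succ l m n hm j h)

theorem lt_length_wordIter (hm : ∀ h, 2 ≤ m h) (i h : ℕ) :
    i < (wordIter l m n i h).length := by
  induction i generalizing h with
  | zero => simp [wordIter]
  | succ i ih =>
    calc i + 1 < 2 * (wordIter l m n i (h + 1)).length := by linarith [ih (h + 1)]
      _ ≤ m h * (wordIter l m n i (h + 1)).length := Nat.mul_le_mul_right _ (hm h)
      _ ≤ _ := length_subw_ge l m n h _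

theorem limWord_eq_getElem (hm : ∀ h, 2 ≤ m h) {i h j : ℕ}
    (hj : j < (wordIter l m n i h).length) :
    limWord l m n h j = (wordIter l m n i h)[j] := by
  have hm0 : ∀ h, 0 < m h := fun h => by linarith [hm h]
  have hj' : j < (wordIter l m n (j + 1) h).length :=
    (Nat.lt_succ_self j).trans (lt_length_wordIter l m n hm _ h)
  rw [limWord, List.getD_eq_getElem _ _ hj',
    (wordIter_prefix_of_le l m n hm0 (le_max_right i (j + 1)) h).getElem hj',
    (wordIter_prefix_of_le l m n hm0 (le_max_left i (j + 1)) h).getElem hj]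

theorem isFactor_limWord_of_infix (hm : ∀ h, 2 ≤ m h) {i h : ℕ} {w : List Bool}
    (hw : w <:+: wordIter l m n i h) : IsFactor (limWord l m n h) w :=
  IsFactor.of_infix (fun _ hj => limWord_eq_getElem l m n hm hj) hw

theorem isFactor_uvSeq_fst (hm : ∀ h, 2 ≤ m h) (i : ℕ) :
    IsFactor (limWord l m n 0) (uvSeq l m n i).1 :=
  isFactor_limWord_of_infix l m n hm (i := i) (by rw [wordIter_zero_eq_uvSeq])

theorem isFactor_uvSeq_snd (hm : ∀ h, 2 ≤ m h) (hl : ∀ h, 0 < l h) (i : ℕ) :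
    IsFactor (limWord l m n 0) (uvSeq l m n i).2 := by
  refine isFactor_limWord_of_infix l m n hm (i := i + 1) ?_
  rw [wordIter_zero_eq_uvSeq]
  exact List.infix_append_of_infix_right (prefix_wpow (hl i)).isInfix

theorem length_uvSeq_fst_le_snd (hln : ∀ i, l i ≤ n i) (i : ℕ) :
    (uvSeq l m n i).1.length ≤ (uvSeq l m n i).2.length := by
  cases i with
  | zero => rfl
  | succ i =>
    simp only [uvSeq, List.length_append, length_wpow]
    gcongr
    exact hln i

end Substitution

section Frequencies

variable {l m n : ℕ → ℕ}

theorem four_pow_two_pow_succ (i : ℕ) : (4 : ℝ) ^ 2 ^ (i + 1) = (4 ^ 2 ^ i) ^ 2 := by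
  rw [pow_succ, pow_mul]

theorem cast_eq_of_eq_two_pow {a : ℕ → ℕ} {k c : ℕ}
    (ha : ∀ i, a i = 2 ^ (2 * k * 2 ^ i + c)) (i : ℕ) :
    (a i : ℝ) = 2 ^ c * (4 ^ 2 ^ i) ^ k := by
  rw [ha, show (4 : ℝ) = 2 ^ 2 by norm_num, ← pow_mul, ← pow_mul]
  push_cast
  rw [pow_add]; ring_nf

theorem cast_params_eq (hl : ∀ i, l i = 2 ^ (2 * 2 ^ i + 4))
    (hm : ∀ i, m i = 2 ^ (8 * 2 ^ i)) (hn : ∀ i, n i = 2 ^ (10 * 2 ^ i)) (i : ℕ) :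
    (l i : ℝ) = 16 * 4 ^ 2 ^ i ∧ (m i : ℝ) = (4 ^ 2 ^ i) ^ 4 ∧
      (n i : ℝ) = (4 ^ 2 ^ i) ^ 5 :=
  ⟨by norm_num [cast_eq_of_eq_two_pow (k := 1) (c := 4) hl i],
    by norm_num [cast_eq_of_eq_two_pow (k := 4) (c := 0) hm i],
    by norm_num [cast_eq_of_eq_two_pow (k := 5) (c := 0) hn i]⟩

theorem length_uvSeq_snd (hl : ∀ i, l i = 2 ^ (2 * 2 ^ i + 4))
    (hm : ∀ i, m i = 2 ^ (8 * 2 ^ i)) (hn : ∀ i, n i = 2 ^ (10 * 2 ^ i)) (i : ℕ) :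
    ((uvSeq l m n i).2.length : ℝ) = 4 ^ 2 ^ i / 4 * (uvSeq l m n i).1.length := by
  induction i with
  | zero => norm_num [uvSeq]
  | succ i ih =>
    obtain ⟨hli, hmi, hni⟩ := cast_params_eq hl hm hn i
    simp only [uvSeq, List.length_append, length_wpow]
    push_cast
    rw [ih, hli, hmi, hni, four_pow_two_pow_succ]
    ring

theorem zeroFreq_gap_succ (hl : ∀ i, l i = 2 ^ (2 * 2 ^ i + 4))
    (hm : ∀ i, m i = 2 ^ (8 * 2 ^ i)) (hn : ∀ i, n i = 2 ^ (10 * 2 ^ i)) {i : ℕ}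
    (hi : 0 < (uvSeq l m n i).1.length) :
    zeroFreq (uvSeq l m n (i + 1)).1 - zeroFreq (uvSeq l m n (i + 1)).2 =
      ((4 ^ 2 ^ i) ^ 2 - 4) / ((4 ^ 2 ^ i) ^ 2 + 4) *
        (zeroFreq (uvSeq l m n i).1 - zeroFreq (uvSeq l m n i).2) := by
  obtain ⟨hli, hmi, hni⟩ := cast_params_eq hl hm hn i
  have hb : (0 : ℝ) < (uvSeq l m n i).1.length := by exact_mod_cast hi
  simp only [uvSeq, zeroFreq_wpow_append]
  rw [length_uvSeq_snd hl hm hn, hli, hmi, hni]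
  field_simp
  ring

theorem half_add_inv_le_zeroFreq_gap (hl : ∀ i, l i = 2 ^ (2 * 2 ^ i + 4))
    (hm : ∀ i, m i = 2 ^ (8 * 2 ^ i)) (hn : ∀ i, n i = 2 ^ (10 * 2 ^ i)) {i : ℕ}
    (hi : 1 ≤ i) :
    1 / 2 + 1 / 4 ^ 2 ^ i ≤ zeroFreq (uvSeq l m n i).1 - zeroFreq (uvSeq l m n i).2 := by
  have hlen (i : ℕ) : 0 < (uvSeq l m n i).1.length := by
    rw [← wordIter_zero_eq_uvSeq]
    exact (Nat.zero_le i).trans_lt <| lt_length_wordIter l m n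
      (fun h => hm h ▸ Nat.le_self_pow (by positivity) 2) i 0
  induction i, hi using Nat.le_induction with
  | base =>
    rw [zeroFreq_gap_succ hl hm hn (hlen 0)]
    norm_num [uvSeq, zeroFreq]
  | succ i hi ih =>
    rw [zeroFreq_gap_succ hl hm hn (hlen i), four_pow_two_pow_succ]
    set t : ℝ := 4 ^ 2 ^ i
    have ht : 16 ≤ t := by
      calc (16 : ℝ) = 4 ^ 2 ^ 1 := by norm_num
        _ ≤ t := pow_le_pow_right₀ (by norm_num) (Nat.pow_le_pow_right two_pos hi)
    calc 1 / 2 + 1 / t ^ 2 ≤ (t ^ 2 - 4) / (t ^ 2 + 4) * (1 / 2 + 1 / t) := by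
          have : 0 < t := by linarith
          field_simp
          nlinarith [mul_le_mul ht ht (by norm_num) (by positivity)]
      _ ≤ _ := mul_le_mul_of_nonneg_left ih (div_nonneg (by nlinarith) (by positivity))

end Frequencies

theorem stmt8 (l m n : ℕ → ℕ) (hl : ∀ i, l i = 2 ^ (2 * 2 ^ i + 4))
    (hm : ∀ i, m i = 2 ^ (8 * 2 ^ i)) (hn : ∀ i, n i = 2 ^ (10 * 2 ^ i)) :
    ¬ ∃ f : ℝ, ∀ w : ℕ → List Bool,
        (∀ k, IsFactor (limWord l m n 0) (w k)) →
        Filter.Tendsto (fun k => (w k).length) Filter.atTop Filter.atTop →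
        Filter.Tendsto (fun k => ((w k).count false : ℝ) / ((w k).length : ℝ))
          Filter.atTop (nhds f) := by
  have hm2 (i : ℕ) : 2 ≤ m i := hm i ▸ Nat.le_self_pow (by positivity) 2
  have hl0 (i : ℕ) : 0 < l i := hl i ▸ Nat.two_pow_pos _
  have hln (i : ℕ) : l i ≤ n i := by
    rw [hl, hn]
    exact Nat.pow_le_pow_right two_pos (by have := Nat.one_le_two_pow (n := i); omega)
  have hlen : Tendsto (fun i => (uvSeq l m n i).1.length) atTop atTop :=
    tendsto_atTop_mono
      (fun i => (wordIter_zero_eq_uvSeq l m n i ▸ lt_length_wordIter l m n hm2 i 0).le) tendsto_id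
  refine not_uniform_zeroFreq (isFactor_uvSeq_fst l m n hm2) (isFactor_uvSeq_snd l m n hm2 hl0)
    hlen (tendsto_atTop_mono (length_uvSeq_fst_le_snd l m n hln) hlen) one_half_pos ?_
  filter_upwards [eventually_ge_atTop 1] with i hi
  exact (le_add_of_nonneg_right (by positivity)).trans (half_add_inv_le_zeroFreq_gap hl hm hn hi)
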